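/- arXiv:1605.04764 — 3 statements merged into one kernel-verified Lean document; each statement's English description precedes it below -/
import Mathlib

section
/- (Correctness of the ternary tessellation projection, Lemma 1 of the paper.) Let z ∈ ℝ^k be nonzero. Then max over a ∈ Γ of ⟨a, z⟩ equals max over t ∈ {1,…,k} of (1/√t) · ∑_{i=1}^{t} |z|_{(i)}, where |z|_{(1)} ≥ ⋯ ≥ |z|_{(k)} is the decreasing rearrangement of (|z_1|,…,|z_k|). Consequently, min over a ∈ Γ of the angular distance d(a, z) equals 1 − (1/‖z‖₂) · max over t ∈ {1,…,k} of (1/√t) · ∑_{i=1}^{t} |z|_{(i)}. -/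
open Finset

/-- Euclidean inner product on `Fin k → ℝ`. -/
def euclInner {k : ℕ} (x y : Fin k → ℝ) : ℝ := ∑ i, x i * y i

/-- Euclidean norm on `Fin k → ℝ`. -/
noncomputable def euclNorm {k : ℕ} (x : Fin k → ℝ) : ℝ := Real.sqrt (∑ i, x i ^ 2)

/-- Angular distance `d(x, y) = 1 − ⟨x, y⟩/(‖x‖₂ ‖y‖₂)`. -/
noncomputable def angDist {k : ℕ} (x y : Fin k → ℝ) : ℝ :=
  1 - euclInner x y / (euclNorm x * euclNorm y)

/-- The ternary tessellating set `Γ = { a/‖a‖₂ : a ∈ {-1,0,1}^k, a ≠ 0 }`. -/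
noncomputable def Gamma (k : ℕ) : Set (Fin k → ℝ) :=
  {v | ∃ a : Fin k → ℝ, (∀ i, a i ∈ ({-1, 0, 1} : Set ℝ)) ∧ a ≠ 0 ∧
    v = (euclNorm a)⁻¹ • a}

/-!
For a ternary `a` with support `B`, `⟨a/‖a‖₂, z⟩ ≤ (∑_{j ∈ B} |z_j|)/√|B|`, with equality when `a`
is a sign pattern of `z` on `B`. For a fixed size `|B| = t` the sum is largest when `B` carries the
`t` largest entries of `|z|`, since the `j`-th smallest element of `B` sits at position at least `j`
of the decreasing rearrangement. Hence the maximum over `Γ` is the maximum over `t` of the sorted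
prefix sums divided by `√t`. As `Γ` consists of unit vectors, `d(a, z) = 1 − ⟨a, z⟩/‖z‖₂` on `Γ`,
which turns the maximum into the minimal angular distance.
-/

lemma Fin.val_le_of_strictMono {s k : ℕ} {e : Fin s → Fin k} (he : StrictMono e) (j : Fin s) :
    (j : ℕ) ≤ e j := by
  simpa using card_le_card_of_injOn e (s := Iio j) (t := Iio (e j))
    (fun i hi => by simpa using he (by simpa using hi)) he.injective.injOn

lemma Fin.filter_val_lt_eq_map_castLEEmb {t k : ℕ} (ht : t ≤ k) :
    univ.filter (fun i : Fin k => (i : ℕ) < t) = univ.map (Fin.castLEEmb ht) := by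
  ext i
  simp only [mem_filter, mem_univ, true_and, mem_map, Fin.castLEEmb_apply]
  exact ⟨fun hi => ⟨⟨i, hi⟩, rfl⟩, by rintro ⟨j, rfl⟩; exact j.isLt⟩

lemma Antitone.sum_le_sum_filter_val_lt_card {M : Type*} [AddCommMonoid M] [PartialOrder M]
    [IsOrderedAddMonoid M] {k : ℕ} {g : Fin k → M} (hg : Antitone g) (B : Finset (Fin k)) :
    ∑ i ∈ B, g i ≤ ∑ i ∈ univ.filter (fun i : Fin k => (i : ℕ) < #B), g i := by
  have hB : #B ≤ k := by simpa using card_le_univ B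
  set e := B.orderEmbOfFin rfl
  calc ∑ i ∈ B, g i = ∑ j, g (e j) := by
        conv_lhs => rw [← B.map_orderEmbOfFin_univ rfl, sum_map]
        rfl
    _ ≤ ∑ j, g (Fin.castLE hB j) :=
        sum_le_sum fun j _ => hg (Fin.le_def.2 (Fin.val_le_of_strictMono e.strictMono j))
    _ = _ := by rw [Fin.filter_val_lt_eq_map_castLEEmb hB, sum_map]; rfl

lemma Antitone.sum_le_sum_filter_val_lt_card_of_perm {M : Type*} [AddCommMonoid M]
    [PartialOrder M] [IsOrderedAddMonoid M] {k : ℕ} {g : Fin k → M} (σ : Equiv.Perm (Fin k))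
    (hg : Antitone (g ∘ σ)) (B : Finset (Fin k)) :
    ∑ j ∈ B, g j ≤ ∑ i ∈ univ.filter (fun i : Fin k => (i : ℕ) < #B), g (σ i) := by
  simpa [sum_map] using hg.sum_le_sum_filter_val_lt_card (B.map σ.symm.toEmbedding)

lemma euclInner_smul_left {k : ℕ} (c : ℝ) (x y : Fin k → ℝ) :
    euclInner (c • x) y = c * euclInner x y := by
  simp [euclInner, mul_sum, mul_assoc]

lemma euclNorm_smul {k : ℕ} (c : ℝ) (x : Fin k → ℝ) : euclNorm (c • x) = |c| * euclNorm x := by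
  simp only [euclNorm, Pi.smul_apply, smul_eq_mul, mul_pow, ← mul_sum]
  rw [Real.sqrt_mul (sq_nonneg c), Real.sqrt_sq_eq_abs]

lemma euclNorm_pos {k : ℕ} {x : Fin k → ℝ} (hx : x ≠ 0) : 0 < euclNorm x := by
  obtain ⟨j, hj⟩ := Function.ne_iff.1 hx
  exact Real.sqrt_pos.2 <| (sq_pos_of_ne_zero hj).trans_le <|
    single_le_sum (fun i _ => sq_nonneg (x i)) (mem_univ j)

section Ternary

variable {k : ℕ} {a : Fin k → ℝ}

lemma sum_sq_eq_card_support_of_ternary (ha : ∀ i, a i ∈ ({-1, 0, 1} : Set ℝ)) :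
    ∑ i, a i ^ 2 = #(univ.filter (a · ≠ 0)) := by
  rw [card_filter, Nat.cast_sum]
  refine sum_congr rfl fun i _ => ?_
  obtain h | h | h : a i = -1 ∨ a i = 0 ∨ a i = 1 := ha i <;> simp [h]

lemma sum_mul_le_sum_abs_support_of_ternary (ha : ∀ i, a i ∈ ({-1, 0, 1} : Set ℝ))
    (z : Fin k → ℝ) : ∑ i, a i * z i ≤ ∑ i ∈ univ.filter (a · ≠ 0), |z i| := by
  rw [sum_filter]
  refine sum_le_sum fun i _ => ?_
  obtain h | h | h : a i = -1 ∨ a i = 0 ∨ a i = 1 := ha i <;> simp [h, neg_le_abs, le_abs_self]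

end Ternary

noncomputable def signOn {k : ℕ} (z : Fin k → ℝ) (B : Finset (Fin k)) : Fin k → ℝ :=
  fun j => if j ∈ B then (if 0 ≤ z j then 1 else -1) else 0

section SignOn

variable {k : ℕ} (z : Fin k → ℝ) (B : Finset (Fin k))

lemma signOn_mem (i : Fin k) : signOn z B i ∈ ({-1, 0, 1} : Set ℝ) := by
  unfold signOn; split_ifs <;> simp

lemma filter_signOn_ne_zero : univ.filter (signOn z B · ≠ 0) = B := by
  ext i
  by_cases hi : i ∈ B <;> by_cases hz : 0 ≤ z i <;> simp [signOn, hi, hz]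

lemma sum_signOn_mul : ∑ i, signOn z B i * z i = ∑ i ∈ B, |z i| := by
  simp only [signOn, ite_mul, zero_mul, sum_ite_mem, univ_inter]
  refine sum_congr rfl fun i _ => ?_
  split_ifs with h
  · rw [one_mul, abs_of_nonneg h]
  · rw [neg_one_mul, abs_of_neg (not_le.1 h)]

end SignOn

section Gamma

variable {k : ℕ} {v : Fin k → ℝ}

lemma exists_mem_Gamma_euclInner_eq (z : Fin k → ℝ) {B : Finset (Fin k)} (hB : B.Nonempty) :
    ∃ v ∈ Gamma k, euclInner v z = (√(#B : ℝ))⁻¹ * ∑ j ∈ B, |z j| := by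
  have hnorm : euclNorm (signOn z B) = √(#B : ℝ) := by
    rw [euclNorm, sum_sq_eq_card_support_of_ternary (signOn_mem z B), filter_signOn_ne_zero]
  have hne : signOn z B ≠ 0 := by
    obtain ⟨j, hj⟩ := hB
    exact Function.ne_iff.2 ⟨j, by rw [← filter_signOn_ne_zero z B] at hj; simpa using hj⟩
  refine ⟨_, ⟨signOn z B, signOn_mem z B, hne, rfl⟩, ?_⟩
  rw [euclInner_smul_left, hnorm, euclInner, sum_signOn_mul]

lemma euclInner_le_of_mem_Gamma (hv : v ∈ Gamma k) (z : Fin k → ℝ) :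
    ∃ B : Finset (Fin k), B.Nonempty ∧ euclInner v z ≤ (√(#B : ℝ))⁻¹ * ∑ j ∈ B, |z j| := by
  obtain ⟨a, ha, ha0, rfl⟩ := hv
  refine ⟨univ.filter (a · ≠ 0), ?_, ?_⟩
  · obtain ⟨j, hj⟩ := Function.ne_iff.1 ha0
    exact ⟨j, by simpa using hj⟩
  rw [euclInner_smul_left, euclNorm, sum_sq_eq_card_support_of_ternary ha]
  exact mul_le_mul_of_nonneg_left (sum_mul_le_sum_abs_support_of_ternary ha z) (by positivity)

lemma euclNorm_eq_one_of_mem_Gamma (hv : v ∈ Gamma k) : euclNorm v = 1 := by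
  obtain ⟨a, -, ha0, rfl⟩ := hv
  have hpos := euclNorm_pos ha0
  rw [euclNorm_smul, abs_inv, abs_of_pos hpos, inv_mul_cancel₀ hpos.ne']

lemma angDist_of_mem_Gamma (hv : v ∈ Gamma k) (z : Fin k → ℝ) :
    angDist v z = 1 - euclInner v z / euclNorm z := by
  rw [angDist, euclNorm_eq_one_of_mem_Gamma hv, one_mul]

lemma isLeast_angDist_Gamma {z : Fin k → ℝ} {M : ℝ}
    (hM : IsGreatest {x : ℝ | ∃ a ∈ Gamma k, x = euclInner a z} M) :
    IsLeast {x : ℝ | ∃ a ∈ Gamma k, x = angDist a z} (1 - M / euclNorm z) := by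
  obtain ⟨⟨v, hv, rfl⟩, hmax⟩ := hM
  refine ⟨⟨v, hv, (angDist_of_mem_Gamma hv z).symm⟩, ?_⟩
  rintro _ ⟨w, hw, rfl⟩
  rw [angDist_of_mem_Gamma hw]
  exact sub_le_sub_left (div_le_div_of_nonneg_right (hmax ⟨w, hw, rfl⟩) (Real.sqrt_nonneg _)) 1

end Gamma

/-- `i` is `0`-indexed, so for antitone `i ↦ |z (σ i)|` this is `(1/√t) ∑_{i=1}^t |z|_{(i)}`. -/
noncomputable def sortedPrefixValue {k : ℕ} (z : Fin k → ℝ) (σ : Equiv.Perm (Fin k)) (t : ℕ) :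
    ℝ :=
  1 / √(t : ℝ) * ∑ i ∈ univ.filter (fun i : Fin k => (i : ℕ) < t), |z (σ i)|

lemma isGreatest_euclInner_Gamma {k : ℕ} {z : Fin k → ℝ} {σ : Equiv.Perm (Fin k)}
    (hσ : Antitone fun i => |z (σ i)|) {t₀ : ℕ} (ht₀ : t₀ ∈ Icc 1 k)
    (hmax : ∀ t ∈ Icc 1 k, sortedPrefixValue z σ t ≤ sortedPrefixValue z σ t₀) :
    IsGreatest {x : ℝ | ∃ a ∈ Gamma k, x = euclInner a z} (sortedPrefixValue z σ t₀) := by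
  obtain ⟨ht₁, htk⟩ := mem_Icc.1 ht₀
  set P := univ.filter (fun i : Fin k => (i : ℕ) < t₀)
  have hP : #P = t₀ := by simp [P, Fin.card_filter_val_lt, htk]
  constructor
  · obtain ⟨v, hv, hvz⟩ := exists_mem_Gamma_euclInner_eq z (B := P.map σ.toEmbedding)
      (card_pos.1 (by rw [card_map, hP]; exact ht₁))
    refine ⟨v, hv, ?_⟩
    rw [hvz, card_map, hP, sum_map, sortedPrefixValue, one_div]
    rfl
  · rintro _ ⟨v, hv, rfl⟩
    obtain ⟨B, hB, hle⟩ := euclInner_le_of_mem_Gamma hv z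
    calc euclInner v z ≤ (√(#B : ℝ))⁻¹ * ∑ j ∈ B, |z j| := hle
      _ ≤ sortedPrefixValue z σ #B := by
          rw [sortedPrefixValue, one_div]
          gcongr
          exact hσ.sum_le_sum_filter_val_lt_card_of_perm (g := fun j => |z j|) σ B
      _ ≤ _ := hmax _ (mem_Icc.2 ⟨hB.card_pos, by simpa using card_le_univ B⟩)

/-- Lemma 1 of the paper: for nonzero `z`, the maximum of `⟨a, z⟩` over `a ∈ Γ`
equals the maximum over `t ∈ {1,…,k}` of `(1/√t)·∑_{i=1}^t |z|_{(i)}` (decreasing rearrangement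
given via a permutation `σ` with `i ↦ |z (σ i)|` antitone); consequently the minimum of the
angular distance `d(a, z)` over `a ∈ Γ` equals `1 − M/‖z‖₂` for that common maximum `M`. -/
theorem stmt_2 {k : ℕ} (z : Fin k → ℝ) (hz : z ≠ 0)
    (σ : Equiv.Perm (Fin k)) (hσ : Antitone fun i => |z (σ i)|) :
    ∃ M : ℝ,
      IsGreatest {x : ℝ | ∃ a ∈ Gamma k, x = euclInner a z} M ∧
      IsGreatest {x : ℝ | ∃ t ∈ Finset.Icc 1 k, x =
        (1 / Real.sqrt t) *
          ∑ i ∈ Finset.univ.filter (fun i : Fin k => (i : ℕ) < t), |z (σ i)|} M ∧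
      IsLeast {x : ℝ | ∃ a ∈ Gamma k, x = angDist a z} (1 - M / euclNorm z) := by
  have hk : 0 < k := Nat.pos_of_ne_zero (by rintro rfl; exact hz (Subsingleton.elim _ _))
  obtain ⟨t₀, ht₀, hmax⟩ :=
    (Icc 1 k).exists_max_image (sortedPrefixValue z σ) ⟨1, mem_Icc.2 ⟨le_rfl, hk⟩⟩
  have hΓ := isGreatest_euclInner_Gamma hσ ht₀ hmax
  exact ⟨_, hΓ, ⟨⟨t₀, ht₀, rfl⟩, fun _ ⟨t, ht, hx⟩ => hx ▸ hmax t ht⟩, isLeast_angDist_Gamma hΓ⟩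
end

section
/- (Approximation guarantee for the D-ary tessellation, Lemma 2 of the paper.) Let D be an integer with D > √k, let z ∈ ℝ^k with ‖z‖₂ = 1, and let ã ∈ ℝ^k be a vector with every coordinate in B_D satisfying |z_i − ã_i| ≤ 1/D for all i (the output of coordinate-wise rounding). Then ã ≠ 0; set a_z = ã/‖ã‖₂ ∈ Γ_D. If a* ∈ Γ_D satisfies d(a*, z) ≤ d(b, z) for all b ∈ Γ_D, then ‖a_z − a*‖₂ ≤ 4√k / D and d(a_z, a*) ≤ 8k / D². -/
open Finset

/-- The `D`-ary base set `B_D = { h/D : h ∈ ℤ, |h| ≤ D }`. -/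
def baseSetD (D : ℕ) : Set ℝ := {x | ∃ h : ℤ, |h| ≤ (D : ℤ) ∧ x = (h : ℝ) / D}

/-- The `D`-ary tessellating set `Γ_D = { a/‖a‖₂ : a ∈ (B_D)^k, a ≠ 0 }`. -/
noncomputable def GammaD (k D : ℕ) : Set (Fin k → ℝ) :=
  {v | ∃ a : Fin k → ℝ, (∀ i, a i ∈ baseSetD D) ∧ a ≠ 0 ∧ v = (euclNorm a)⁻¹ • a}

/-! The rounding error satisfies `‖ã - z‖₂ ≤ √k / D < 1`, so `ã ≠ 0`. Normalizing moves `ã` by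
`|‖z‖₂ - ‖ã‖₂| ≤ ‖ã - z‖₂`, hence `a_z` is within `2√k / D` of `z`. For unit vectors the angular
distance is half the squared Euclidean distance, so the minimizer `a*` is at least as close to `z`
as `a_z`, and the triangle inequality gives `‖a_z - a*‖₂ ≤ 4√k / D`; squaring and halving gives
the second bound. -/

section NormedSpace

variable {E : Type*} [NormedAddCommGroup E] [NormedSpace ℝ E]

theorem norm_inv_norm_smul_sub_le {z : E} (hz : ‖z‖ = 1) (a : E) :
    ‖‖a‖⁻¹ • a - z‖ ≤ 2 * ‖a - z‖ := by
  rcases eq_or_ne a 0 with rfl | ha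
  · simp [hz]
  have hnorm : ‖‖a‖⁻¹ • a - a‖ = |‖z‖ - ‖a‖| := by
    rw [show ‖a‖⁻¹ • a - a = (‖a‖⁻¹ - 1) • a by rw [sub_smul, one_smul], norm_smul,
      Real.norm_eq_abs, ← abs_norm a, ← abs_mul, abs_norm, sub_mul,
      inv_mul_cancel₀ (norm_ne_zero_iff.mpr ha), hz, one_mul]
  calc ‖‖a‖⁻¹ • a - z‖ ≤ ‖‖a‖⁻¹ • a - a‖ + ‖a - z‖ := norm_sub_le_norm_sub_add_norm_sub _ _ _
    _ ≤ ‖z - a‖ + ‖a - z‖ := by rw [hnorm]; gcongr; exact abs_norm_sub_norm_le z a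
    _ = 2 * ‖a - z‖ := by rw [norm_sub_rev]; ring

theorem norm_inv_norm_smul_sub_le_of_closer {z s : E} (hz : ‖z‖ = 1) (a : E)
    (hs : ‖s - z‖ ≤ ‖‖a‖⁻¹ • a - z‖) : ‖‖a‖⁻¹ • a - s‖ ≤ 4 * ‖a - z‖ := by
  have hnorm := norm_inv_norm_smul_sub_le hz a
  calc ‖‖a‖⁻¹ • a - s‖ ≤ ‖‖a‖⁻¹ • a - z‖ + ‖s - z‖ := by
        rw [← norm_sub_rev z s]; exact norm_sub_le_norm_sub_add_norm_sub _ _ _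
    _ ≤ 4 * ‖a - z‖ := by linarith

end NormedSpace

theorem one_sub_real_inner_eq_of_norm_eq_one {F : Type*} [NormedAddCommGroup F]
    [InnerProductSpace ℝ F] {u v : F} (hu : ‖u‖ = 1) (hv : ‖v‖ = 1) :
    1 - inner ℝ u v = ‖u - v‖ ^ 2 / 2 := by
  rw [norm_sub_sq_real, hu, hv]
  ring

section Euclidean

variable {k : ℕ}

theorem euclNorm_eq_norm_toLp (x : Fin k → ℝ) : euclNorm x = ‖WithLp.toLp 2 x‖ := by
  simp [EuclideanSpace.norm_eq, euclNorm]

theorem euclInner_eq_inner_toLp (x y : Fin k → ℝ) :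
    euclInner x y = inner ℝ (WithLp.toLp 2 x) (WithLp.toLp 2 y) := by
  simp [euclInner, PiLp.inner_apply, mul_comm]

theorem euclNorm_nonneg (x : Fin k → ℝ) : 0 ≤ euclNorm x := Real.sqrt_nonneg _

theorem euclNorm_inv_smul_self {x : Fin k → ℝ} (hx : x ≠ 0) :
    euclNorm ((euclNorm x)⁻¹ • x) = 1 := by
  simpa [euclNorm_eq_norm_toLp] using
    norm_smul_inv_norm (𝕜 := ℝ) ((WithLp.toLp_eq_zero 2).not.mpr hx)

theorem euclNorm_eq_one_of_mem_GammaD {D : ℕ} {v : Fin k → ℝ} (hv : v ∈ GammaD k D) :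
    euclNorm v = 1 := by
  obtain ⟨a, -, ha, rfl⟩ := hv
  exact euclNorm_inv_smul_self ha

theorem euclNorm_le_sqrt_mul_of_forall_abs_le {x : Fin k → ℝ} {c : ℝ} (hc : 0 ≤ c)
    (hx : ∀ i, |x i| ≤ c) : euclNorm x ≤ Real.sqrt k * c := by
  calc euclNorm x ≤ Real.sqrt (k * c ^ 2) := by
        refine Real.sqrt_le_sqrt ?_
        calc ∑ i, x i ^ 2 ≤ ∑ _i : Fin k, c ^ 2 :=
              Finset.sum_le_sum fun i _ => sq_le_sq' (abs_le.mp (hx i)).1 (abs_le.mp (hx i)).2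
          _ = k * c ^ 2 := by simp
    _ = Real.sqrt k * c := by rw [Real.sqrt_mul (Nat.cast_nonneg k), Real.sqrt_sq hc]

theorem angDist_eq_of_euclNorm_eq_one {u v : Fin k → ℝ} (hu : euclNorm u = 1)
    (hv : euclNorm v = 1) : angDist u v = euclNorm (u - v) ^ 2 / 2 := by
  rw [angDist, hu, hv, euclInner_eq_inner_toLp, mul_one, div_one, euclNorm_eq_norm_toLp]
  rw [euclNorm_eq_norm_toLp] at hu hv
  exact one_sub_real_inner_eq_of_norm_eq_one hu hv

theorem angDist_le_angDist_iff {u v z : Fin k → ℝ} (hu : euclNorm u = 1) (hv : euclNorm v = 1)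
    (hz : euclNorm z = 1) : angDist u z ≤ angDist v z ↔ euclNorm (u - z) ≤ euclNorm (v - z) := by
  rw [angDist_eq_of_euclNorm_eq_one hu hz, angDist_eq_of_euclNorm_eq_one hv hz,
    div_le_div_iff_of_pos_right two_pos, pow_le_pow_iff_left₀ (euclNorm_nonneg _)
      (euclNorm_nonneg _) two_ne_zero]

theorem euclNorm_inv_smul_sub_le_of_closer {z s : Fin k → ℝ} (hz : euclNorm z = 1)
    (a : Fin k → ℝ) (hs : euclNorm (s - z) ≤ euclNorm ((euclNorm a)⁻¹ • a - z)) :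
    euclNorm ((euclNorm a)⁻¹ • a - s) ≤ 4 * euclNorm (a - z) := by
  simp only [euclNorm_eq_norm_toLp, WithLp.toLp_sub, WithLp.toLp_smul] at hz hs ⊢
  exact norm_inv_norm_smul_sub_le_of_closer hz _ hs

end Euclidean

/-- Lemma 2 of the paper: for `D > √k`, a unit vector `z`, and a coordinate-wise
rounding `ã` of `z` to `B_D` (so `|z_i − ã_i| ≤ 1/D` for all `i`), we have `ã ≠ 0`, the
normalization `a_z = ã/‖ã‖₂` lies in `Γ_D`, and for any `a* ∈ Γ_D` minimizing the angular
distance to `z`, `‖a_z − a*‖₂ ≤ 4√k/D` and `d(a_z, a*) ≤ 8k/D²`. -/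
theorem stmt_8 {k : ℕ} (D : ℕ) (hD : (D : ℝ) > Real.sqrt k)
    (z : Fin k → ℝ) (hz : euclNorm z = 1)
    (atil : Fin k → ℝ) (ha_base : ∀ i, atil i ∈ baseSetD D)
    (ha_round : ∀ i, |z i - atil i| ≤ 1 / D) :
    atil ≠ 0 ∧ (euclNorm atil)⁻¹ • atil ∈ GammaD k D ∧
    ∀ astar ∈ GammaD k D, (∀ b ∈ GammaD k D, angDist astar z ≤ angDist b z) →
      euclNorm ((euclNorm atil)⁻¹ • atil - astar) ≤ 4 * Real.sqrt k / D ∧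
      angDist ((euclNorm atil)⁻¹ • atil) astar ≤ 8 * k / D ^ 2 := by
  have hD0 : (0 : ℝ) < D := (Real.sqrt_nonneg k).trans_lt hD
  have hround : euclNorm (atil - z) ≤ Real.sqrt k / D := by
    simpa only [mul_one_div] using euclNorm_le_sqrt_mul_of_forall_abs_le (x := atil - z)
      (by positivity)
      fun i => (abs_sub_comm (atil i) (z i)).trans_le (ha_round i)
  have hsmall : Real.sqrt k / D < 1 := (div_lt_one hD0).mpr hD
  have hne : atil ≠ 0 := by
    rintro rfl
    simp only [zero_sub, euclNorm_eq_norm_toLp, WithLp.toLp_neg, norm_neg] at hround hz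
    linarith
  have hmem : (euclNorm atil)⁻¹ • atil ∈ GammaD k D := ⟨atil, ha_base, hne, rfl⟩
  refine ⟨hne, hmem, fun astar hastar hmin => ?_⟩
  have haz := euclNorm_inv_smul_self hne
  have hastar1 := euclNorm_eq_one_of_mem_GammaD hastar
  have hcloser := (angDist_le_angDist_iff hastar1 haz hz).mp (hmin _ hmem)
  have hdist : euclNorm ((euclNorm atil)⁻¹ • atil - astar) ≤ 4 * Real.sqrt k / D := by
    rw [mul_div_assoc]
    linarith [euclNorm_inv_smul_sub_le_of_closer hz atil hcloser]
  refine ⟨hdist, ?_⟩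
  calc angDist ((euclNorm atil)⁻¹ • atil) astar
      = euclNorm ((euclNorm atil)⁻¹ • atil - astar) ^ 2 / 2 :=
        angDist_eq_of_euclNorm_eq_one haz hastar1
    _ ≤ (4 * Real.sqrt k / D) ^ 2 / 2 := by gcongr; exact euclNorm_nonneg _
    _ = 8 * k / D ^ 2 := by rw [div_pow, mul_pow, Real.sq_sqrt (Nat.cast_nonneg k)]; ring
end

section
/- (Nearest-neighbor distance in the ternary tessellation.) Let a ∈ {-1,0,1}^k be a nonzero ternary vector with exactly t nonzero entries, where t < k. Then the minimum of the angular distance d(a, b) over all nonzero ternary vectors b ∈ {-1,0,1}^k with b ≠ a equals 1 − √( t / (t + 1) ). In particular, the distance from a tessellating vector in Γ to its nearest distinct tessellating vector depends only on the number t of nonzero entries of its unnormalized ternary representative. -/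
open Finset

/-!
For ternary `a`, `b` put `t = ‖a‖²`, `s = ‖b‖²` and `m = ⟨a, b⟩`; `t` and `s` count the nonzero
entries. Termwise `m ≤ min s t`, and for `b ≠ a` some coordinate of `a - b` has absolute value at
least `1`, so `t + s - 2m = ‖a - b‖² ≥ 1`. Since `s` and `t` are integers these bounds force
`m² (t + 1) ≤ t² s`, i.e. `m / √(ts) ≤ √(t / (t + 1))`. Equality holds for `b` obtained from `a`
by changing one zero entry to `1`, which exists because `t < k`.
-/

section Ternary

variable {x y : ℝ}

lemma sq_eq_ite_of_mem_ternary (hx : x ∈ ({-1, 0, 1} : Set ℝ)) :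
    x ^ 2 = if x ≠ 0 then 1 else 0 := by
  rcases hx with rfl | rfl | rfl <;> norm_num

lemma mul_le_sq_of_mem_ternary (hx : x ∈ ({-1, 0, 1} : Set ℝ))
    (hy : y ∈ ({-1, 0, 1} : Set ℝ)) : x * y ≤ y ^ 2 := by
  rcases hx with rfl | rfl | rfl <;> rcases hy with rfl | rfl | rfl <;> norm_num

lemma one_le_sq_sub_of_mem_ternary (hx : x ∈ ({-1, 0, 1} : Set ℝ))
    (hy : y ∈ ({-1, 0, 1} : Set ℝ)) (hxy : x ≠ y) : 1 ≤ (x - y) ^ 2 := by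
  rcases hx with rfl | rfl | rfl <;> rcases hy with rfl | rfl | rfl <;> norm_num at *

end Ternary

lemma sq_mul_succ_le_sq_mul {m : ℝ} {s t : ℕ} (hm : 0 < m) (hmt : m ≤ t) (hms : m ≤ s)
    (hmst : 2 * m + 1 ≤ s + t) : m ^ 2 * (t + 1) ≤ t ^ 2 * s := by
  rcases lt_trichotomy s t with hst | rfl | hst
  · have hst' : (s : ℝ) + 1 ≤ t := by exact_mod_cast hst
    have hsq : m ^ 2 ≤ s ^ 2 := pow_le_pow_left₀ hm.le hms 2
    nlinarith [mul_le_mul_of_nonneg_right hsq (by positivity : (0 : ℝ) ≤ t + 1),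
      mul_le_mul_of_nonneg_left hst' (by positivity : (0 : ℝ) ≤ s * (t + 1))]
  · have hm' : m ≤ s - 1 / 2 := by linarith
    have hsq : m ^ 2 ≤ (s - 1 / 2) ^ 2 := pow_le_pow_left₀ hm.le hm' 2
    nlinarith [mul_le_mul_of_nonneg_right hsq (by positivity : (0 : ℝ) ≤ s + 1)]
  · have hst' : (t : ℝ) + 1 ≤ s := by exact_mod_cast hst
    nlinarith [mul_le_mul hmt hmt hm.le (Nat.cast_nonneg t)]

lemma div_sqrt_mul_sqrt_le_sqrt_div {m s t : ℝ} (hm : 0 < m) (hs : 0 < s) (ht : 0 < t)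
    (h : m ^ 2 * (t + 1) ≤ t ^ 2 * s) : m / (√t * √s) ≤ √(t / (t + 1)) := by
  rw [Real.le_sqrt (by positivity) (by positivity), div_pow, mul_pow,
    Real.sq_sqrt ht.le, Real.sq_sqrt hs.le, div_le_div_iff₀ (by positivity) (by positivity)]
  nlinarith

lemma div_sqrt_mul_sqrt_succ {t : ℝ} (ht : 0 ≤ t) : t / (√t * √(t + 1)) = √(t / (t + 1)) := by
  rcases ht.eq_or_lt with rfl | hpos
  · simp
  have hsqrt : √t ≠ 0 := (Real.sqrt_pos.mpr hpos).ne'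
  rw [Real.sqrt_div ht]
  field_simp
  rw [Real.sq_sqrt ht]

section TernaryVector

variable {k : ℕ} {a b : Fin k → ℝ}

lemma euclInner_comm (a b : Fin k → ℝ) : euclInner a b = euclInner b a := by
  simp only [euclInner, mul_comm]

lemma sum_sq_eq_card_support (ha : ∀ i, a i ∈ ({-1, 0, 1} : Set ℝ)) :
    ∑ i, a i ^ 2 = #{i | a i ≠ 0} := by
  simp only [fun i => sq_eq_ite_of_mem_ternary (ha i), sum_boole]

lemma euclNorm_eq_sqrt_card_support (ha : ∀ i, a i ∈ ({-1, 0, 1} : Set ℝ)) :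
    euclNorm a = √(#{i | a i ≠ 0} : ℝ) := by
  rw [euclNorm, sum_sq_eq_card_support ha]

lemma euclInner_le_card_support_right (ha : ∀ i, a i ∈ ({-1, 0, 1} : Set ℝ))
    (hb : ∀ i, b i ∈ ({-1, 0, 1} : Set ℝ)) : euclInner a b ≤ #{i | b i ≠ 0} := by
  rw [← sum_sq_eq_card_support hb]
  exact sum_le_sum fun i _ => mul_le_sq_of_mem_ternary (ha i) (hb i)

lemma two_mul_euclInner_add_one_le (ha : ∀ i, a i ∈ ({-1, 0, 1} : Set ℝ))
    (hb : ∀ i, b i ∈ ({-1, 0, 1} : Set ℝ)) (hab : b ≠ a) :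
    2 * euclInner a b + 1 ≤ #{i | a i ≠ 0} + #{i | b i ≠ 0} := by
  obtain ⟨j, hj⟩ := Function.ne_iff.mp hab
  have hdist : 1 ≤ ∑ i, (a i - b i) ^ 2 :=
    (one_le_sq_sub_of_mem_ternary (ha j) (hb j) (Ne.symm hj)).trans
      (single_le_sum (fun i _ => sq_nonneg (a i - b i)) (mem_univ j))
  have hexpand : ∑ i, (a i - b i) ^ 2 = ∑ i, a i ^ 2 + ∑ i, b i ^ 2 - 2 * euclInner a b := by
    simp only [euclInner, mul_sum, ← sum_add_distrib, ← sum_sub_distrib]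
    exact sum_congr rfl fun i _ => by ring
  rw [← sum_sq_eq_card_support ha, ← sum_sq_eq_card_support hb]
  linarith

lemma le_angDist_of_ne (ha : ∀ i, a i ∈ ({-1, 0, 1} : Set ℝ))
    (hb : ∀ i, b i ∈ ({-1, 0, 1} : Set ℝ)) (hab : b ≠ a) :
    1 - √((#{i | a i ≠ 0} : ℝ) / (#{i | a i ≠ 0} + 1)) ≤ angDist a b := by
  rw [angDist, euclNorm_eq_sqrt_card_support ha, euclNorm_eq_sqrt_card_support hb,
    sub_le_sub_iff_left]
  rcases le_or_gt (euclInner a b) 0 with hm | hm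
  · exact (div_nonpos_of_nonpos_of_nonneg hm (by positivity)).trans (Real.sqrt_nonneg _)
  have hmt := euclInner_comm a b ▸ euclInner_le_card_support_right hb ha
  have hms := euclInner_le_card_support_right ha hb
  exact div_sqrt_mul_sqrt_le_sqrt_div hm (hm.trans_le hms) (hm.trans_le hmt)
    (sq_mul_succ_le_sq_mul hm hmt hms (by linarith [two_mul_euclInner_add_one_le ha hb hab]))

lemma angDist_update_of_eq_zero (ha : ∀ i, a i ∈ ({-1, 0, 1} : Set ℝ)) {j : Fin k}
    (hj : a j = 0) :
    angDist a (Function.update a j 1) =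
      1 - √((#{i | a i ≠ 0} : ℝ) / (#{i | a i ≠ 0} + 1)) := by
  have hinner : euclInner a (Function.update a j 1) = ∑ i, a i ^ 2 := by
    refine sum_congr rfl fun i _ => ?_
    rcases eq_or_ne i j with rfl | hij
    · simp [hj]
    · rw [Function.update_of_ne hij, sq]
  have hnorm : ∑ i, Function.update a j 1 i ^ 2 = ∑ i, a i ^ 2 + 1 := by
    rw [← Fintype.sum_ite_eq' j fun _ => (1 : ℝ), ← sum_add_distrib]
    refine sum_congr rfl fun i _ => ?_
    rcases eq_or_ne i j with rfl | hij
    · simp [hj]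
    · simp [hij]
  rw [angDist, hinner, euclNorm, euclNorm, hnorm, sum_sq_eq_card_support ha,
    div_sqrt_mul_sqrt_succ (Nat.cast_nonneg _)]

end TernaryVector

theorem stmt_11_general {k : ℕ} (a : Fin k → ℝ)
    (ha_ternary : ∀ i, a i ∈ ({-1, 0, 1} : Set ℝ))
    (t : ℕ) (hta : (Finset.univ.filter fun i => a i ≠ 0).card = t) (htk : t < k) :
    IsLeast {x : ℝ | ∃ b : Fin k → ℝ, (∀ i, b i ∈ ({-1, 0, 1} : Set ℝ)) ∧
        b ≠ 0 ∧ b ≠ a ∧ x = angDist a b}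
      (1 - Real.sqrt ((t : ℝ) / ((t : ℝ) + 1))) := by
  subst hta
  refine ⟨?_, fun _ ⟨b, hb, _, hba, hx⟩ => hx ▸ le_angDist_of_ne ha_ternary hb hba⟩
  obtain ⟨j, hj⟩ : ∃ j, a j = 0 := by
    by_contra! h
    simp [filter_true_of_mem fun i _ => h i] at htk
  refine ⟨Function.update a j 1, fun i => ?_, ?_, ?_,
    (angDist_update_of_eq_zero ha_ternary hj).symm⟩
  · rcases eq_or_ne i j with rfl | hij
    · simp
    · simpa [hij] using ha_ternary i
  · exact fun h => by simpa using congrFun h j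
  · exact fun h => by simpa [hj] using congrFun h j

/-- nearest-neighbor distance in the ternary tessellation: for a nonzero
ternary vector `a` with exactly `t < k` nonzero entries, the minimum of `d(a, b)` over all
nonzero ternary vectors `b ≠ a` equals `1 − √(t/(t+1))`. -/
theorem stmt_11 {k : ℕ} (a : Fin k → ℝ)
    (ha_ternary : ∀ i, a i ∈ ({-1, 0, 1} : Set ℝ)) (ha_ne : a ≠ 0)
    (t : ℕ) (hta : (Finset.univ.filter fun i => a i ≠ 0).card = t) (htk : t < k) :
    IsLeast {x : ℝ | ∃ b : Fin k → ℝ, (∀ i, b i ∈ ({-1, 0, 1} : Set ℝ)) ∧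
        b ≠ 0 ∧ b ≠ a ∧ x = angDist a b}
      (1 - Real.sqrt ((t : ℝ) / ((t : ℝ) + 1))) :=
  stmt_11_general a ha_ternary t hta htk
end
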